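/- Let k, l be positive integers. The rational function binom(k+l,k)_{t^4} · [2]_{t^{2k}} · [2]_{t^{2l}} / [2]_{t^{2k+2l}} is a polynomial in t with integer coefficients, and its value at t = 1 equals 2·binom(k+l, k). -/

import Mathlib

/-!
Write `q = t⁴`, `u = t^{2k}`, `v = t^{2l}` and `B = binom(k+l,k)_q`, `C = binom(k+l-1,k)_q`,
`D = binom(k+l-1,k-1)_q`. Splitting `k`-subsets of `{0, …, n}` according to whether they contain
`n`, resp. `0`, gives the two `q`-Pascal recurrences `B = C + v²D` and `B = u²C + D`.
Adding `u` times the first to `v` times the second yields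
`B (1 + u)(1 + v) = (1 + uv)(B + uC + vD)`, so the quotient is the integer polynomial
`B + uC + vD`, whose value at `t = 1` is `binom(k+l,k) + binom(k+l-1,k) + binom(k+l-1,k-1)`.
-/
open Polynomial

/-- The quantum number `[a]_{t^b} = 1 + t^b + ⋯ + t^{b(a-1)}` as a polynomial in `ℚ[t]`. -/
noncomputable def qnumPow (a b : ℕ) : Polynomial ℚ := ∑ i ∈ Finset.range a, X ^ (b * i)

/-- The Gaussian (quantum) binomial coefficient `binom(n,k)_q` as a polynomial in `ℤ[q]`,
counting `k`-element subsets of `{0, …, n-1}` by inversions. -/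
noncomputable def gaussBinom (n k : ℕ) : Polynomial ℤ :=
  ∑ S ∈ Finset.powersetCard k (Finset.range n), X ^ ((∑ i ∈ S, i) - k * (k - 1) / 2)

/-- The Gaussian binomial `binom(n,k)` in the variable `t^m`, over `ℚ`. -/
noncomputable def gaussBinomPow (n k m : ℕ) : Polynomial ℚ :=
  ((gaussBinom n k).map (Int.castRingHom ℚ)).comp (X ^ m)

open Finset

theorem Finset.sum_range_card_le_sum (S : Finset ℕ) : ∑ i ∈ range #S, i ≤ ∑ i ∈ S, i := by
  have h := Finset.sum_range_le_sum (s := S.map Nat.castEmbedding) (c := 0) (by simp)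
  simp only [card_map, zero_add, sum_map, Nat.castEmbedding_apply] at h
  rw [← Nat.cast_sum, ← Nat.cast_sum] at h
  exact_mod_cast h

theorem Finset.sum_powersetCard_succ_insert {α M : Type*} [DecidableEq α] [AddCommMonoid M]
    {x : α} {s : Finset α} (hx : x ∉ s) (k : ℕ) (f : Finset α → M) :
    ∑ S ∈ powersetCard (k + 1) (insert x s), f S =
      ∑ S ∈ powersetCard (k + 1) s, f S + ∑ S ∈ powersetCard k s, f (insert x S) := by
  have hxS {S} (hS : S ∈ powersetCard k s) : x ∉ S := fun h => hx ((mem_powersetCard.1 hS).1 h)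
  rw [powersetCard_succ_insert hx, sum_union, sum_image]
  · intro S hS T hT h
    rw [← erase_insert (hxS hS), h, erase_insert (hxS hT)]
  · refine disjoint_left.2 fun S hS hS' => ?_
    obtain ⟨T, -, rfl⟩ := mem_image.1 hS'
    exact hx ((mem_powersetCard.1 hS).1 (mem_insert_self x T))

noncomputable def subsetSumPoly (n k : ℕ) : ℤ[X] :=
  ∑ S ∈ powersetCard k (range n), X ^ (∑ i ∈ S, i)

theorem subsetSumPoly_eq (n k : ℕ) :
    subsetSumPoly n k = X ^ (∑ i ∈ range k, i) * gaussBinom n k := by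
  rw [subsetSumPoly, gaussBinom, mul_sum, ← sum_range_id]
  refine sum_congr rfl fun S hS => ?_
  obtain ⟨-, rfl⟩ := mem_powersetCard.1 hS
  rw [← pow_add, Nat.add_sub_cancel' (sum_range_card_le_sum S)]

theorem subsetSumPoly_succ_succ (n k : ℕ) :
    subsetSumPoly (n + 1) (k + 1) = subsetSumPoly n (k + 1) + X ^ n * subsetSumPoly n k := by
  rw [subsetSumPoly, range_add_one, sum_powersetCard_succ_insert notMem_range_self,
    subsetSumPoly, subsetSumPoly, mul_sum]
  congr 1
  refine sum_congr rfl fun S hS => ?_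
  rw [sum_insert fun h => notMem_range_self ((mem_powersetCard.1 hS).1 h), pow_add]

theorem sum_powersetCard_map_add_one (n k : ℕ) :
    ∑ S ∈ powersetCard k ((range n).map (addRightEmbedding 1)), (X : ℤ[X]) ^ (∑ i ∈ S, i) =
      X ^ k * subsetSumPoly n k := by
  rw [powersetCard_map, sum_map, subsetSumPoly, mul_sum]
  refine sum_congr rfl fun S hS => ?_
  obtain ⟨-, rfl⟩ := mem_powersetCard.1 hS
  simp [sum_add_distrib, pow_add, mul_comm]

theorem subsetSumPoly_succ_succ' (n k : ℕ) :
    subsetSumPoly (n + 1) (k + 1) =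
      X ^ (k + 1) * subsetSumPoly n (k + 1) + X ^ k * subsetSumPoly n k := by
  have h0 : 0 ∉ (range n).map (addRightEmbedding 1) := by simp
  have hrange : range (n + 1) = insert 0 ((range n).map (addRightEmbedding 1)) := by
    ext (_ | _) <;> simp
  rw [subsetSumPoly, hrange, sum_powersetCard_succ_insert h0, sum_powersetCard_map_add_one,
    ← sum_powersetCard_map_add_one n k]
  congr 1
  refine sum_congr rfl fun S hS => ?_
  rw [sum_insert fun h => h0 ((mem_powersetCard.1 hS).1 h), zero_add]

theorem gaussBinom_succ_add (k m : ℕ) :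
    gaussBinom (k + 1 + m) (k + 1) =
      gaussBinom (k + m) (k + 1) + X ^ m * gaussBinom (k + m) k := by
  have h := subsetSumPoly_succ_succ (k + m) k
  simp only [subsetSumPoly_eq, sum_range_succ, pow_add] at h
  refine mul_left_cancel₀ (pow_ne_zero (∑ i ∈ range k, i + k) (X_ne_zero (R := ℤ))) ?_
  rw [Nat.add_right_comm, pow_add]
  linear_combination h

theorem gaussBinom_succ_add' (k m : ℕ) :
    gaussBinom (k + 1 + m) (k + 1) =
      X ^ (k + 1) * gaussBinom (k + m) (k + 1) + gaussBinom (k + m) k := by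
  have h := subsetSumPoly_succ_succ' (k + m) k
  simp only [subsetSumPoly_eq, sum_range_succ, pow_add] at h
  refine mul_left_cancel₀ (pow_ne_zero (∑ i ∈ range k, i + k) (X_ne_zero (R := ℤ))) ?_
  rw [Nat.add_right_comm, pow_add]
  linear_combination h

theorem gaussBinom_eval_one (n k : ℕ) : (gaussBinom n k).eval 1 = n.choose k := by
  simp [gaussBinom, eval_finsetSum]

theorem mul_one_add_mul_one_add_of_eq_add {R : Type*} [CommRing R] {b c d u v : R}
    (hc : b = c + v ^ 2 * d) (hd : b = u ^ 2 * c + d) :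
    b * ((1 + u) * (1 + v)) = (1 + u * v) * (b + u * c + v * d) := by
  linear_combination u * hc + v * hd

-- `k - 1` is truncated, so this is the intended quotient only for `0 < k`.
noncomputable def grassmannQuotient (k l : ℕ) : ℤ[X] :=
  (gaussBinom (k + l) k).comp (X ^ 4) + X ^ (2 * k) * (gaussBinom (k + l - 1) k).comp (X ^ 4) +
    X ^ (2 * l) * (gaussBinom (k + l - 1) (k - 1)).comp (X ^ 4)

theorem gaussBinom_comp_X_pow_four_mul {k : ℕ} (l : ℕ) (hk : 0 < k) :
    (gaussBinom (k + l) k).comp (X ^ 4) * ((1 + X ^ (2 * k)) * (1 + X ^ (2 * l))) =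
      (1 + X ^ (2 * k + 2 * l)) * grassmannQuotient k l := by
  obtain ⟨k, rfl⟩ := Nat.exists_eq_add_one.2 hk
  have hsq (n : ℕ) : ((X : ℤ[X]) ^ 4) ^ n = (X ^ (2 * n)) ^ 2 := by ring
  have hc := congrArg (comp · (X ^ 4)) (gaussBinom_succ_add k l)
  have hd := congrArg (comp · (X ^ 4)) (gaussBinom_succ_add' k l)
  simp only [add_comp, mul_comp, X_pow_comp, hsq] at hc hd
  rw [grassmannQuotient, show k + 1 + l - 1 = k + l by omega, Nat.add_sub_cancel, pow_add]
  exact mul_one_add_mul_one_add_of_eq_add hc hd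

theorem grassmannQuotient_eval_one {k : ℕ} (l : ℕ) (hk : 0 < k) :
    (grassmannQuotient k l).eval 1 = 2 * (k + l).choose k := by
  obtain ⟨k, rfl⟩ := Nat.exists_eq_add_one.2 hk
  simp only [grassmannQuotient, eval_add, eval_mul, eval_comp, eval_pow, eval_X, one_pow,
    gaussBinom_eval_one, one_mul, Nat.add_sub_cancel, Nat.add_right_comm k 1 l,
    Nat.choose_succ_succ' (k + l) k]
  push_cast
  ring

theorem qnumPow_eval_one (a b : ℕ) : (qnumPow a b).eval 1 = a := by
  simp [qnumPow, eval_finsetSum]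

theorem qnumPow_two (b : ℕ) : qnumPow 2 b = 1 + X ^ b := by
  simp [qnumPow, sum_range_succ]

theorem stmt_18_general (k l : ℕ) (hk : 0 < k) :
    ∃ f : Polynomial ℤ,
      algebraMap (Polynomial ℚ) (RatFunc ℚ)
          (gaussBinomPow (k + l) k 4 * qnumPow 2 (2 * k) * qnumPow 2 (2 * l)) /
          algebraMap (Polynomial ℚ) (RatFunc ℚ) (qnumPow 2 (2 * k + 2 * l)) =
        algebraMap (Polynomial ℚ) (RatFunc ℚ) (f.map (Int.castRingHom ℚ)) ∧
      f.eval 1 = 2 * ((k + l).choose k : ℤ) := by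
  have hq : qnumPow 2 (2 * k + 2 * l) ≠ 0 := fun h => by
    simpa [h] using qnumPow_eval_one 2 (2 * k + 2 * l)
  refine ⟨grassmannQuotient k l, ?_, grassmannQuotient_eval_one l hk⟩
  rw [div_eq_iff (RatFunc.algebraMap_ne_zero hq), ← map_mul]
  congr 1
  have h := congrArg (map (Int.castRingHom ℚ)) (gaussBinom_comp_X_pow_four_mul l hk)
  simp only [Polynomial.map_mul, Polynomial.map_add, Polynomial.map_one, Polynomial.map_pow,
    map_X, map_comp] at h
  rw [gaussBinomPow, qnumPow_two, qnumPow_two, qnumPow_two]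
  linear_combination h

/-- For positive integers `k`, `l`, the rational function
`binom(k+l,k)_{t⁴} · [2]_{t^{2k}} · [2]_{t^{2l}} / [2]_{t^{2k+2l}}` is a polynomial in
`t` with integer coefficients, whose value at `t = 1` equals `2·binom(k+l, k)`.
(This is the Poincaré polynomial of the real Grassmannian `SO(2k+2l)/(SO(2k)×SO(2l))`.) -/
theorem stmt_18 (k l : ℕ) (hk : 0 < k) (hl : 0 < l) :
    ∃ f : Polynomial ℤ,
      algebraMap (Polynomial ℚ) (RatFunc ℚ)
          (gaussBinomPow (k + l) k 4 * qnumPow 2 (2 * k) * qnumPow 2 (2 * l)) /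
          algebraMap (Polynomial ℚ) (RatFunc ℚ) (qnumPow 2 (2 * k + 2 * l)) =
        algebraMap (Polynomial ℚ) (RatFunc ℚ) (f.map (Int.castRingHom ℚ)) ∧
      f.eval 1 = 2 * ((k + l).choose k : ℤ) :=
  stmt_18_general k l hk
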